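/- arXiv:0902.4495 — 4 statements merged into one kernel-verified Lean document; each statement's English description precedes it below -/
import Mathlib

section
/- Let d: X×X → [0,1] be a distance-like function on a Polish space X for which there exists a constant K_d such that d(x,y) ≤ K_d (d(x,z) + d(z,y)) for all x, y, z ∈ X. Let V: X → ℝ₊ be a function for which there exist constants c > 0 and C > 0 such that d(x,z) ≤ c implies V(x) ≤ C V(z). Then there exists a constant K such that, with d̃(x,y) = √(d(x,y)(1 + V(x) + V(y))), the weak triangle inequality d̃(x,y) ≤ K (d̃(x,z) + d̃(z,y)) holds for all x, y, z ∈ X. -/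
open MeasureTheory Filter Topology

noncomputable section

private lemma sqrt_add_le' (a b : ℝ) (ha : 0 ≤ a) (hb : 0 ≤ b) :
    Real.sqrt (a + b) ≤ Real.sqrt a + Real.sqrt b := by
  have h1 := Real.sq_sqrt ha
  have h2 := Real.sq_sqrt hb
  have h3 := Real.sqrt_nonneg a
  have h4 := Real.sqrt_nonneg b
  have h5 : Real.sqrt (a + b) ^ 2 = a + b := Real.sq_sqrt (by linarith)
  nlinarith [Real.sqrt_nonneg (a + b)]

private lemma key_ineq (Kd C c dxy A B vx vy vz : ℝ)
    (hKd : 0 ≤ Kd) (hC : 0 < C) (hc : 0 < c)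
    (hdxy0 : 0 ≤ dxy) (hdxy1 : dxy ≤ 1) (hA : 0 ≤ A) (hB : 0 ≤ B)
    (hvx : 0 ≤ vx) (hvy : 0 ≤ vy) (hvz : 0 ≤ vz)
    (htri : dxy ≤ Kd * (A + B))
    (hx : A ≤ c → vx ≤ C * vz) (hy : B ≤ c → vy ≤ C * vz) :
    dxy * (1 + vx + vy) ≤
      (3 * (Kd * (1 + C) + 1 / c)) * (A * (1 + vx + vz) + B * (1 + vz + vy)) := by
  have hcinv : (0:ℝ) < 1 / c := one_div_pos.mpr hc
  obtain ⟨Kb, hKbdef⟩ : ∃ t : ℝ, Kd * (1 + C) + 1 / c = t := ⟨_, rfl⟩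
  obtain ⟨Q1, hQ1def⟩ : ∃ t : ℝ, A * (1 + vx + vz) = t := ⟨_, rfl⟩
  obtain ⟨Q2, hQ2def⟩ : ∃ t : ℝ, B * (1 + vz + vy) = t := ⟨_, rfl⟩
  rw [hKbdef, hQ1def, hQ2def]
  have hKb : 0 ≤ Kb := by rw [← hKbdef]; positivity
  have hQ1 : (0:ℝ) ≤ Q1 := by rw [← hQ1def]; positivity
  have hQ2 : (0:ℝ) ≤ Q2 := by rw [← hQ2def]; positivity
  have hKdKb : Kd ≤ Kb := by linarith [mul_nonneg hKd hC.le]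
  have hKdCKb : Kd * C ≤ Kb := by linarith [mul_nonneg hKd hC.le, mul_nonneg hKd hC.le]
  have hcKb : 1 / c ≤ Kb := by linarith [mul_nonneg hKd hC.le, hKd]
  -- term 1 : dxy ≤ Kb * (Q1 + Q2)
  have hAQ : A ≤ Q1 := by linarith [mul_nonneg hA (add_nonneg hvx hvz)]
  have hBQ : B ≤ Q2 := by linarith [mul_nonneg hB (add_nonneg hvz hvy)]
  have t1 : dxy ≤ Kb * (Q1 + Q2) := by
    have e1 : Kd * (A + B) ≤ Kd * (Q1 + Q2) :=
      mul_le_mul_of_nonneg_left (by linarith) hKd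
    have e2 : Kd * (Q1 + Q2) ≤ Kb * (Q1 + Q2) :=
      mul_le_mul_of_nonneg_right hKdKb (by linarith)
    linarith
  -- term 2 : dxy * vx ≤ Kb * (Q1 + Q2)
  have t2 : dxy * vx ≤ Kb * (Q1 + Q2) := by
    rcases le_or_gt A c with hAc | hAc
    · have hvxz : vx ≤ C * vz := hx hAc
      have e1 : A * vx ≤ Q1 := by linarith [mul_nonneg hA (by linarith : (0:ℝ) ≤ 1 + vz)]
      have e2 : B * vz ≤ Q2 := by linarith [mul_nonneg hB (by linarith : (0:ℝ) ≤ 1 + vy)]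
      have e3 : Kd * (A * vx) ≤ Kd * Q1 := mul_le_mul_of_nonneg_left e1 hKd
      have e4 : Kd * C * (B * vz) ≤ Kd * C * Q2 :=
        mul_le_mul_of_nonneg_left e2 (by positivity)
      have e5 : Kd * (B * vx) ≤ Kd * C * (B * vz) := by
        have h : B * vx ≤ B * (C * vz) := mul_le_mul_of_nonneg_left hvxz hB
        calc Kd * (B * vx) ≤ Kd * (B * (C * vz)) := mul_le_mul_of_nonneg_left h hKd
        _ = Kd * C * (B * vz) := by ring
      have e6 : dxy * vx ≤ Kd * (A + B) * vx := mul_le_mul_of_nonneg_right htri hvx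
      have e6' : Kd * (A + B) * vx = Kd * (A * vx) + Kd * (B * vx) := by ring
      have e7 : Kd * Q1 ≤ Kb * Q1 := mul_le_mul_of_nonneg_right hKdKb hQ1
      have e8 : Kd * C * Q2 ≤ Kb * Q2 := mul_le_mul_of_nonneg_right hKdCKb hQ2
      have e9 : Kb * (Q1 + Q2) = Kb * Q1 + Kb * Q2 := by ring
      linarith
    · have h1 : dxy * vx ≤ vx := by linarith [mul_nonneg (by linarith : (0:ℝ) ≤ 1 - dxy) hvx]
      have h2 : c * vx ≤ Q1 := by linarith [mul_le_mul_of_nonneg_right hAc.le hvx, mul_nonneg hA (by linarith : (0:ℝ) ≤ 1 + vz)]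
      have h3 : vx ≤ (1 / c) * Q1 := by
        have h := mul_le_mul_of_nonneg_left h2 hcinv.le
        have h' : (1 / c) * (c * vx) = vx := by field_simp
        linarith
      have h4 : (1 / c) * Q1 ≤ Kb * (Q1 + Q2) := by
        have e1 : (1 / c) * Q1 ≤ Kb * Q1 := mul_le_mul_of_nonneg_right hcKb hQ1
        have e2 : 0 ≤ Kb * Q2 := mul_nonneg hKb hQ2
        linarith [mul_add Kb Q1 Q2]
      linarith
  -- term 3 : dxy * vy ≤ Kb * (Q1 + Q2)
  have t3 : dxy * vy ≤ Kb * (Q1 + Q2) := by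
    rcases le_or_gt B c with hBc | hBc
    · have hvyz : vy ≤ C * vz := hy hBc
      have e1 : B * vy ≤ Q2 := by linarith [mul_nonneg hB (by linarith : (0:ℝ) ≤ 1 + vz)]
      have e2 : A * vz ≤ Q1 := by linarith [mul_nonneg hA (by linarith : (0:ℝ) ≤ 1 + vx)]
      have e3 : Kd * (B * vy) ≤ Kd * Q2 := mul_le_mul_of_nonneg_left e1 hKd
      have e4 : Kd * C * (A * vz) ≤ Kd * C * Q1 :=
        mul_le_mul_of_nonneg_left e2 (by positivity)
      have e5 : Kd * (A * vy) ≤ Kd * C * (A * vz) := by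
        have h : A * vy ≤ A * (C * vz) := mul_le_mul_of_nonneg_left hvyz hA
        calc Kd * (A * vy) ≤ Kd * (A * (C * vz)) := mul_le_mul_of_nonneg_left h hKd
        _ = Kd * C * (A * vz) := by ring
      have e6 : dxy * vy ≤ Kd * (A + B) * vy := mul_le_mul_of_nonneg_right htri hvy
      have e6' : Kd * (A + B) * vy = Kd * (A * vy) + Kd * (B * vy) := by ring
      have e7 : Kd * Q2 ≤ Kb * Q2 := mul_le_mul_of_nonneg_right hKdKb hQ2
      have e8 : Kd * C * Q1 ≤ Kb * Q1 := mul_le_mul_of_nonneg_right hKdCKb hQ1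
      have e9 : Kb * (Q1 + Q2) = Kb * Q1 + Kb * Q2 := by ring
      linarith
    · have h1 : dxy * vy ≤ vy := by linarith [mul_nonneg (by linarith : (0:ℝ) ≤ 1 - dxy) hvy]
      have h2 : c * vy ≤ Q2 := by linarith [mul_le_mul_of_nonneg_right hBc.le hvy, mul_nonneg hB (by linarith : (0:ℝ) ≤ 1 + vz)]
      have h3 : vy ≤ (1 / c) * Q2 := by
        have h := mul_le_mul_of_nonneg_left h2 hcinv.le
        have h' : (1 / c) * (c * vy) = vy := by field_simp
        linarith
      have h4 : (1 / c) * Q2 ≤ Kb * (Q1 + Q2) := by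
        have e1 : (1 / c) * Q2 ≤ Kb * Q2 := mul_le_mul_of_nonneg_right hcKb hQ2
        have e2 : 0 ≤ Kb * Q1 := mul_nonneg hKb hQ1
        linarith [mul_add Kb Q1 Q2]
      linarith
  have expand : dxy * (1 + vx + vy) = dxy + dxy * vx + dxy * vy := by ring
  have expand2 : (3 * Kb) * (Q1 + Q2) = Kb * (Q1 + Q2) + Kb * (Q1 + Q2) + Kb * (Q1 + Q2) := by
    ring
  linarith

/-- **Lemma 4.12.** If the distance-like function `d : X×X → [0,1]` satisfies a weak
triangle inequality with constant `K_d`, and `V ≥ 0` satisfies `d(x,z) ≤ c → V(x) ≤ C V(z)`,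
then `d̃(x,y) = √(d(x,y)(1 + V(x) + V(y)))` satisfies a weak triangle inequality. -/
theorem stmt_8 {X : Type*} [TopologicalSpace X]
    (d : X → X → ℝ)
    (hd_symm : ∀ x y, d x y = d y x)
    (hd_eq_zero : ∀ x y, d x y = 0 ↔ x = y)
    (hd_lsc : LowerSemicontinuous (fun p : X × X => d p.1 p.2))
    (hd_nonneg : ∀ x y, 0 ≤ d x y) (hd_le_one : ∀ x y, d x y ≤ 1)
    (K_d : ℝ) (hK_d : ∀ x y z, d x y ≤ K_d * (d x z + d z y))
    (V : X → ℝ) (hVnonneg : ∀ x, 0 ≤ V x)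
    (c C : ℝ) (hc : 0 < c) (hC : 0 < C)
    (hV : ∀ x z, d x z ≤ c → V x ≤ C * V z) :
    ∃ K : ℝ, ∀ x y z : X,
      Real.sqrt (d x y * (1 + V x + V y)) ≤
        K * (Real.sqrt (d x z * (1 + V x + V z)) + Real.sqrt (d z y * (1 + V z + V y))) := by
  set Kd' : ℝ := max K_d 0 with hKd'
  have hKd'0 : 0 ≤ Kd' := le_max_right _ _
  set K3 : ℝ := 3 * (Kd' * (1 + C) + 1 / c) with hK3def
  have hK3pos : 0 < K3 := by positivity
  refine ⟨Real.sqrt K3, fun x y z => ?_⟩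
  have hAnn : 0 ≤ d x z := hd_nonneg x z
  have hBnn : 0 ≤ d z y := hd_nonneg z y
  have hVx := hVnonneg x
  have hVy := hVnonneg y
  have hVz := hVnonneg z
  have hS1nn : (0:ℝ) ≤ 1 + V x + V z := by linarith
  have hS2nn : (0:ℝ) ≤ 1 + V z + V y := by linarith
  have htri : d x y ≤ Kd' * (d x z + d z y) := by
    calc d x y ≤ K_d * (d x z + d z y) := hK_d x y z
    _ ≤ Kd' * (d x z + d z y) :=
        mul_le_mul_of_nonneg_right (le_max_left _ _) (by linarith)
  have key : d x y * (1 + V x + V y) ≤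
      K3 * (d x z * (1 + V x + V z) + d z y * (1 + V z + V y)) := by
    refine key_ineq Kd' C c (d x y) (d x z) (d z y) (V x) (V y) (V z)
      hKd'0 hC hc (hd_nonneg x y) (hd_le_one x y) hAnn hBnn hVx hVy hVz htri
      (fun h => hV x z h) (fun h => hV y z (by rw [hd_symm]; exact h))
  calc Real.sqrt (d x y * (1 + V x + V y))
      ≤ Real.sqrt (K3 * (d x z * (1 + V x + V z) + d z y * (1 + V z + V y))) :=
        Real.sqrt_le_sqrt key
  _ = Real.sqrt K3 * Real.sqrt (d x z * (1 + V x + V z) + d z y * (1 + V z + V y)) :=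
        Real.sqrt_mul hK3pos.le _
  _ ≤ Real.sqrt K3 *
        (Real.sqrt (d x z * (1 + V x + V z)) + Real.sqrt (d z y * (1 + V z + V y))) := by
      apply mul_le_mul_of_nonneg_left _ (Real.sqrt_nonneg _)
      exact sqrt_add_le' _ _ (mul_nonneg hAnn hS1nn) (mul_nonneg hBnn hS2nn)
end
end

section
/- Let X be a Polish space, d: X×X → [0,1] a Borel measurable function, α̃ ∈ (0,1), and T a Markov kernel on X×X such that ∫ d dT(z,·) ≤ α̃ d(z) for every z ∈ X×X with d(z) < 1. For (x,y) ∈ X×X with d(x,y) < 1, let Γ_{x,y} denote the law on (X×X)^ℕ of the Markov chain (Z_n)_{n≥0} with transition kernel T started at Z₀ = (x,y). Then Γ_{x,y}({d(Z_n) ≤ α̃ⁿ for all n ∈ ℕ₀}) ≥ 1 − d(x,y). -/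
open MeasureTheory ProbabilityTheory Filter Topology
open scoped ENNReal NNReal

noncomputable section

/-- `m` is the law on the sequence space of the Markov chain with transition kernel `T`
and initial distribution `μ`, characterised through its finite-dimensional distributions. -/
def IsTrajLaw {Y : Type*} [MeasurableSpace Y] (T : Kernel Y Y) (μ : Measure Y)
    (m : Measure (ℕ → Y)) : Prop :=
  IsProbabilityMeasure m ∧
  m.map (fun ω => ω 0) = μ ∧
  ∀ n : ℕ, m.map (fun ω => ((fun i : Fin (n + 1) => ω i), ω (n + 1))) =
    (m.map (fun ω => (fun i : Fin (n + 1) => ω i))).bind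
      (fun v => (T (v (Fin.last n))).map (fun y => (v, y)))

/-!
Write `V = ofReal ∘ d` and `a = ofReal α̃`. Capped at `1` and stopped when it reaches `1`, the
process `a⁻ⁿ V(Zₙ)` is a nonnegative supermartingale: once stopped it stays at `1`, and before that
`V(Zₙ) < aⁿ ≤ 1`, so the drift condition applies. Its mean therefore never exceeds its initial
value `d(x,y)`, and Markov's inequality bounds the probability of having reached `1` by time `n`,
i.e. of `aᵏ ≤ V(Z_k)` for some `k ≤ n`, by `d(x,y)`. Letting `n → ∞` bounds the probability that
`d(Zₙ) ≤ α̃ⁿ` fails for some `n`. Multiplying through by `aⁿ` keeps everything in `ℝ≥0∞`.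
-/

namespace IsTrajLaw

variable {Y : Type*} [MeasurableSpace Y] {T : Kernel Y Y} {μ : Measure Y} {m : Measure (ℕ → Y)}

theorem lintegral_comp_eval_zero (hm : IsTrajLaw T μ m) {g : Y → ℝ≥0∞} (hg : Measurable g) :
    ∫⁻ ω, g (ω 0) ∂m = ∫⁻ z, g z ∂μ := by
  rw [← hm.2.1, lintegral_map hg (measurable_pi_apply 0)]

theorem lintegral_comp_succ [IsSFiniteKernel T] (hm : IsTrajLaw T μ m) (n : ℕ)
    {G : (Fin (n + 1) → Y) × Y → ℝ≥0∞} (hG : Measurable G) :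
    ∫⁻ ω, G ((fun i : Fin (n + 1) => ω i), ω (n + 1)) ∂m =
      ∫⁻ ω, ∫⁻ w, G ((fun i : Fin (n + 1) => ω i), w) ∂(T (ω n)) ∂m := by
  have hprefix : Measurable fun ω : ℕ → Y => fun i : Fin (n + 1) => ω i :=
    measurable_pi_lambda _ fun i => measurable_pi_apply _
  let κ : Kernel (Fin (n + 1) → Y) ((Fin (n + 1) → Y) × Y) :=
    Kernel.id ×ₖ T.comap (fun v => v (Fin.last n)) (measurable_pi_apply _)
  have hκ : ∀ v, κ v = (T (v (Fin.last n))).map (fun y => (v, y)) := fun v => by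
    rw [Kernel.prod_apply, Kernel.id_apply, Kernel.comap_apply, Measure.dirac_prod]
  calc ∫⁻ ω, G ((fun i : Fin (n + 1) => ω i), ω (n + 1)) ∂m
      = ∫⁻ p, G p ∂((m.map fun ω => fun i : Fin (n + 1) => ω i).bind κ) := by
        rw [← lintegral_map hG (hprefix.prodMk (measurable_pi_apply _)), hm.2.2 n,
          show ⇑κ = _ from funext hκ]
    _ = ∫⁻ ω, ∫⁻ p, G p ∂(κ fun i : Fin (n + 1) => ω i) ∂m := by
        rw [Measure.lintegral_bind κ.aemeasurable hG.aemeasurable,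
          lintegral_map hG.lintegral_kernel hprefix]
    _ = ∫⁻ ω, ∫⁻ w, G ((fun i : Fin (n + 1) => ω i), w) ∂(T (ω n)) ∂m := by
        simp_rw [hκ]
        exact lintegral_congr fun ω => lintegral_map hG measurable_prodMk_left

end IsTrajLaw

section StoppedLevel

variable {Y : Type*} {V : Y → ℝ≥0∞} {a : ℝ≥0∞}

/-- Along a path `ω`, `stoppedLevel V a n (ω|Fin n) (ω n)` is `aⁿ` times the supermartingale
`min 1 (a⁻ⁿ V(ωₙ))` stopped at the first `k` with `aᵏ ≤ V(ω_k)`. -/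
def stoppedLevel (V : Y → ℝ≥0∞) (a : ℝ≥0∞) (n : ℕ) (v : Fin n → Y) (y : Y) : ℝ≥0∞ :=
  if ∃ k : Fin n, a ^ (k : ℕ) ≤ V (v k) then a ^ n else min (a ^ n) (V y)

theorem measurable_stoppedLevel [MeasurableSpace Y] (hV : Measurable V) (n : ℕ) :
    Measurable fun p : (Fin n → Y) × Y => stoppedLevel V a n p.1 p.2 := by
  have hstop : MeasurableSet {p : (Fin n → Y) × Y | ∃ k : Fin n, a ^ (k : ℕ) ≤ V (p.1 k)} := by
    rw [Set.ofPred_exists]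
    exact .iUnion fun k => measurableSet_le measurable_const
      (hV.comp ((measurable_pi_apply k).comp measurable_fst))
  exact Measurable.ite hstop measurable_const (measurable_const.min (hV.comp measurable_snd))

theorem stoppedLevel_of_pow_le {n : ℕ} (v : Fin n → Y) {y : Y} (hy : a ^ n ≤ V y) :
    stoppedLevel V a n v y = a ^ n := by
  unfold stoppedLevel
  split_ifs
  exacts [rfl, min_eq_left hy]

theorem stoppedLevel_of_forall_lt {n : ℕ} {v : Fin n → Y} {y : Y}
    (hv : ∀ k, V (v k) < a ^ (k : ℕ)) (hy : V y < a ^ n) :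
    stoppedLevel V a n v y = V y := by
  simp only [stoppedLevel, not_exists_of_forall_not fun k => (hv k).not_ge, if_false,
    min_eq_right hy.le]

theorem pow_le_stoppedLevel {n : ℕ} {ω : ℕ → Y} (h : ∃ k ≤ n, a ^ k ≤ V (ω k)) :
    a ^ n ≤ stoppedLevel V a n (fun k => ω k) (ω n) := by
  obtain ⟨k, hkn, hk⟩ := h
  rcases hkn.lt_or_eq with hlt | rfl
  · exact (if_pos ⟨⟨k, hlt⟩, hk⟩).ge
  · exact (stoppedLevel_of_pow_le _ hk).ge

theorem lintegral_stoppedLevel_succ_le [MeasurableSpace Y] {T : Kernel Y Y} [IsMarkovKernel T]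
    (ha : a ≤ 1) (hT : ∀ z, V z < 1 → ∫⁻ w, V w ∂(T z) ≤ a * V z) {n : ℕ} (v : Fin (n + 1) → Y) :
    ∫⁻ w, stoppedLevel V a (n + 1) v w ∂(T (v (Fin.last n))) ≤
      a * stoppedLevel V a n (Fin.init v) (v (Fin.last n)) := by
  by_cases hstop : ∃ k : Fin (n + 1), a ^ (k : ℕ) ≤ V (v k)
  · have hprev : stoppedLevel V a n (Fin.init v) (v (Fin.last n)) = a ^ n := by
      rcases Fin.exists_fin_succ'.mp hstop with ⟨k, hk⟩ | hlast
      · exact if_pos ⟨k, hk⟩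
      · exact stoppedLevel_of_pow_le _ hlast
    rw [hprev, ← pow_succ']
    simp only [stoppedLevel, if_pos hstop, lintegral_const, measure_univ, mul_one, le_refl]
  · simp only [not_exists, not_le] at hstop
    have hlast : V (v (Fin.last n)) < a ^ n := hstop (Fin.last n)
    calc ∫⁻ w, stoppedLevel V a (n + 1) v w ∂(T (v (Fin.last n)))
        ≤ ∫⁻ w, V w ∂(T (v (Fin.last n))) :=
          lintegral_mono fun w =>
            (if_neg (not_exists_of_forall_not fun k => (hstop k).not_ge)).trans_le
              (min_le_right _ _)
      _ ≤ a * V (v (Fin.last n)) := hT _ (hlast.trans_le (pow_le_one₀ zero_le ha))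
      _ = a * stoppedLevel V a n (Fin.init v) (v (Fin.last n)) := by
          rw [stoppedLevel_of_forall_lt (v := Fin.init v) (fun k => hstop k.castSucc) hlast]

end StoppedLevel

namespace IsTrajLaw

variable {Y : Type*} [MeasurableSpace Y] {T : Kernel Y Y} [IsMarkovKernel T] {μ : Measure Y}
  {m : Measure (ℕ → Y)} {V : Y → ℝ≥0∞} {a : ℝ≥0∞}

theorem lintegral_stoppedLevel_le (hm : IsTrajLaw T μ m) (hV : Measurable V) (ha : a ≤ 1)
    (hT : ∀ z, V z < 1 → ∫⁻ w, V w ∂(T z) ≤ a * V z) (n : ℕ) :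
    ∫⁻ ω, stoppedLevel V a n (fun k => ω k) (ω n) ∂m ≤ a ^ n * ∫⁻ z, V z ∂μ := by
  induction n with
  | zero =>
    calc ∫⁻ ω, stoppedLevel V a 0 (fun k => ω k) (ω 0) ∂m
        ≤ ∫⁻ ω, V (ω 0) ∂m :=
          lintegral_mono fun ω => (if_neg (by simp)).trans_le (min_le_right _ _)
      _ = a ^ 0 * ∫⁻ z, V z ∂μ := by rw [hm.lintegral_comp_eval_zero hV, pow_zero, one_mul]
  | succ n ih =>
    calc ∫⁻ ω, stoppedLevel V a (n + 1) (fun k => ω k) (ω (n + 1)) ∂m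
        = ∫⁻ ω, ∫⁻ w, stoppedLevel V a (n + 1) (fun k => ω k) w ∂(T (ω n)) ∂m :=
          hm.lintegral_comp_succ n (measurable_stoppedLevel hV _)
      _ ≤ ∫⁻ ω, a * stoppedLevel V a n (fun k => ω k) (ω n) ∂m :=
          lintegral_mono fun ω => lintegral_stoppedLevel_succ_le ha hT fun k : Fin (n + 1) => ω k
      _ = a * ∫⁻ ω, stoppedLevel V a n (fun k => ω k) (ω n) ∂m :=
          lintegral_const_mul' _ _ (ne_top_of_le_ne_top ENNReal.one_ne_top ha)
      _ ≤ a ^ (n + 1) * ∫⁻ z, V z ∂μ := by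
          rw [pow_succ', mul_assoc]
          gcongr

theorem measure_exists_le_pow_le (hm : IsTrajLaw T μ m) (hV : Measurable V) (ha₀ : a ≠ 0)
    (ha : a ≤ 1) (hT : ∀ z, V z < 1 → ∫⁻ w, V w ∂(T z) ≤ a * V z) (n : ℕ) :
    m {ω | ∃ k ≤ n, a ^ k ≤ V (ω k)} ≤ ∫⁻ z, V z ∂μ := by
  have hmeas : Measurable fun ω : ℕ → Y => stoppedLevel V a n (fun k => ω k) (ω n) :=
    (measurable_stoppedLevel hV n).comp (f := fun ω : ℕ → Y => ((fun k : Fin n => ω k), ω n))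
      ((measurable_pi_lambda _ fun k => measurable_pi_apply _).prodMk (measurable_pi_apply n))
  have hmarkov : a ^ n * m {ω | ∃ k ≤ n, a ^ k ≤ V (ω k)} ≤ a ^ n * ∫⁻ z, V z ∂μ :=
    calc a ^ n * m {ω | ∃ k ≤ n, a ^ k ≤ V (ω k)}
        ≤ a ^ n * m {ω | a ^ n ≤ stoppedLevel V a n (fun k => ω k) (ω n)} := by
          gcongr a ^ n * m ?_
          exact fun _ => pow_le_stoppedLevel
      _ ≤ ∫⁻ ω, stoppedLevel V a n (fun k => ω k) (ω n) ∂m :=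
          mul_meas_ge_le_lintegral₀ hmeas.aemeasurable _
      _ ≤ a ^ n * ∫⁻ z, V z ∂μ := hm.lintegral_stoppedLevel_le hV ha hT n
  exact (ENNReal.mul_le_mul_iff_right (pow_ne_zero n ha₀)
    (ENNReal.pow_ne_top (ne_top_of_le_ne_top ENNReal.one_ne_top ha))).mp hmarkov

theorem measure_exists_pow_le_le (hm : IsTrajLaw T μ m) (hV : Measurable V) (ha₀ : a ≠ 0)
    (ha : a ≤ 1) (hT : ∀ z, V z < 1 → ∫⁻ w, V w ∂(T z) ≤ a * V z) :
    m {ω | ∃ n, a ^ n ≤ V (ω n)} ≤ ∫⁻ z, V z ∂μ := by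
  have hunion : {ω : ℕ → Y | ∃ n, a ^ n ≤ V (ω n)} = ⋃ n, {ω | ∃ k ≤ n, a ^ k ≤ V (ω k)} := by
    ext ω
    simp only [Set.mem_ofPred_eq, Set.mem_iUnion]
    exact ⟨fun ⟨k, hk⟩ => ⟨k, k, le_rfl, hk⟩, fun ⟨_, k, _, hk⟩ => ⟨k, hk⟩⟩
  have hmono : Monotone fun n => {ω : ℕ → Y | ∃ k ≤ n, a ^ k ≤ V (ω k)} :=
    fun _ _ hnn' _ ⟨k, hkn, hk⟩ => ⟨k, hkn.trans hnn', hk⟩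
  rw [hunion, hmono.measure_iUnion]
  exact iSup_le (hm.measure_exists_le_pow_le hV ha₀ ha hT)

end IsTrajLaw

theorem stmt_15_general {X : Type*} [MeasurableSpace X]
    (d : X × X → ℝ) (hd_meas : Measurable d) (hd_nonneg : ∀ z, 0 ≤ d z)
    (αt : ℝ) (hαt_pos : 0 < αt) (hαt_lt : αt < 1)
    (T : Kernel (X × X) (X × X)) [IsMarkovKernel T]
    (hT : ∀ z : X × X, d z < 1 →
      ∫⁻ w, ENNReal.ofReal (d w) ∂(T z) ≤ ENNReal.ofReal (αt * d z))
    (x y : X) (Γ : Measure (ℕ → X × X)) (hΓ : IsTrajLaw T (Measure.dirac (x, y)) Γ) :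
    ENNReal.ofReal (1 - d (x, y)) ≤ Γ {ω | ∀ n : ℕ, d (ω n) ≤ αt ^ n} := by
  have hV : Measurable fun z => ENNReal.ofReal (d z) := hd_meas.ennreal_ofReal
  have hdrift : ∀ z, ENNReal.ofReal (d z) < 1 →
      ∫⁻ w, ENNReal.ofReal (d w) ∂(T z) ≤ ENNReal.ofReal αt * ENNReal.ofReal (d z) :=
    fun z hz => ENNReal.ofReal_mul hαt_pos.le ▸ hT z (ENNReal.ofReal_lt_one.mp hz)
  set bad := {ω : ℕ → X × X | ∃ n, ENNReal.ofReal αt ^ n ≤ ENNReal.ofReal (d (ω n))}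
  have hbad : Γ bad ≤ ENNReal.ofReal (d (x, y)) := by
    simpa [lintegral_dirac' _ hV] using hΓ.measure_exists_pow_le_le hV
      (ENNReal.ofReal_pos.mpr hαt_pos).ne' (ENNReal.ofReal_le_one.mpr hαt_lt.le) hdrift
  have hgood : badᶜ ⊆ {ω | ∀ n : ℕ, d (ω n) ≤ αt ^ n} := fun ω hω n => by
    have hlt := not_le.mp fun h => hω ⟨n, h⟩
    rw [← ENNReal.ofReal_pow hαt_pos.le, ENNReal.ofReal_lt_ofReal_iff'] at hlt
    exact hlt.1.le
  have hsplit : 1 ≤ Γ bad + Γ badᶜ := by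
    have := hΓ.1
    rw [← measure_univ (μ := Γ), ← Set.union_compl_self bad]
    exact measure_union_le _ _
  calc ENNReal.ofReal (1 - d (x, y)) = 1 - ENNReal.ofReal (d (x, y)) := by
        rw [ENNReal.ofReal_sub _ (hd_nonneg _), ENNReal.ofReal_one]
    _ ≤ 1 - Γ bad := tsub_le_tsub_left hbad 1
    _ ≤ Γ badᶜ := tsub_le_iff_left.mpr hsplit
    _ ≤ Γ {ω | ∀ n : ℕ, d (ω n) ≤ αt ^ n} := measure_mono hgood

/-- If the Markov kernel `T` on `X × X` contracts the function `d` by a factor `α̃ < 1`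
below level `1`, then with probability at least `1 - d(x,y)` the chain started at `(x,y)`
satisfies `d(Z_n) ≤ α̃ⁿ` for all `n`. -/
theorem stmt_15 {X : Type*} [TopologicalSpace X] [PolishSpace X]
    [MeasurableSpace X] [BorelSpace X]
    (d : X × X → ℝ) (hd_meas : Measurable d)
    (hd_nonneg : ∀ z, 0 ≤ d z) (hd_le_one : ∀ z, d z ≤ 1)
    (αt : ℝ) (hαt_pos : 0 < αt) (hαt_lt : αt < 1)
    (T : Kernel (X × X) (X × X)) [IsMarkovKernel T]
    (hT : ∀ z : X × X, d z < 1 →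
      ∫⁻ w, ENNReal.ofReal (d w) ∂(T z) ≤ ENNReal.ofReal (αt * d z))
    (x y : X) (hxy : d (x, y) < 1)
    (Γ : Measure (ℕ → X × X)) (hΓ : IsTrajLaw T (Measure.dirac (x, y)) Γ) :
    ENNReal.ofReal (1 - d (x, y)) ≤ Γ {ω | ∀ n : ℕ, d (ω n) ≤ αt ^ n} :=
  stmt_15_general d hd_meas hd_nonneg αt hαt_pos hαt_lt T hT x y Γ hΓ
end
end

section
/- Let X be a Polish space and d̃ a lower semicontinuous metric on X (possibly taking the value +∞), lifted to probability measures by d̃(μ,ν) = inf_{π ∈ C(μ,ν)} ∫ d̃ dπ. Let P and P^ε be Markov kernels on X such that: (i) d̃(μP, νP) ≤ (1/2) d̃(μ,ν) for all probability measures μ, ν; (ii) there exist a constant C' ≥ 0 and a measurable function Ṽ: X → ℝ₊, and a Markov kernel Λ from X to X×X with Λ(x,·) ∈ C(P(x,·), P^ε(x,·)) and ∫ d̃ dΛ(x,·) ≤ C' Ṽ(x) for every x ∈ X. If μ★ is an invariant probability measure for P and μ★^ε is an invariant probability measure for P^ε with ∫ Ṽ dμ★^ε < ∞ and d̃(μ★,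 μ★^ε) < ∞, then d̃(μ★, μ★^ε) ≤ 2 C' ∫ Ṽ(x) μ★^ε(dx). -/
/-! The two invariant measures are compared through `μ★^ε P`. By invariance and the contraction,
`d̃(μ★, μ★^ε P) = d̃(μ★ P, μ★^ε P) ≤ d̃(μ★, μ★^ε) / 2`, while averaging the couplings `Λ(x, ·)`
against `μ★^ε` couples `μ★^ε P` with `μ★^ε P^ε = μ★^ε` at cost at most `C' ∫ Ṽ dμ★^ε`.
The lifted distance satisfies the triangle inequality by the gluing lemma (disintegration on the
standard Borel space `X`), so `D ≤ D / 2 + C' ∫ Ṽ dμ★^ε` for `D = d̃(μ★, μ★^ε)`; since `D < ∞`,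
the term `D / 2` can be absorbed. -/

open MeasureTheory ProbabilityTheory Filter Topology
open scoped ENNReal NNReal

noncomputable section

def IsCoupling {α β : Type*} [MeasurableSpace α] [MeasurableSpace β]
    (π : Measure (α × β)) (μ : Measure α) (ν : Measure β) : Prop :=
  π.map Prod.fst = μ ∧ π.map Prod.snd = ν

/-- The lift of an `ℝ≥0∞`-valued distance to probability measures. -/
def liftDistE {α : Type*} [MeasurableSpace α] (d : α → α → ℝ≥0∞) (μ ν : Measure α) :
    ℝ≥0∞ :=
  sInf {r : ℝ≥0∞ | ∃ π : Measure (α × α), IsCoupling π μ ν ∧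
    r = ∫⁻ p, d p.1 p.2 ∂π}

namespace IsCoupling

variable {α β : Type*} [MeasurableSpace α] [MeasurableSpace β]

lemma isProbabilityMeasure {π : Measure (α × β)} {μ : Measure α} {ν : Measure β}
    [hμ : IsProbabilityMeasure μ] (h : IsCoupling π μ ν) : IsProbabilityMeasure π := by
  rw [← h.1] at hμ
  exact Measure.isProbabilityMeasure_of_map Prod.fst

lemma comp {γ : Type*} [MeasurableSpace γ] {Λ : Kernel γ (α × β)} {P : Kernel γ α}
    {Q : Kernel γ β} (hΛ : ∀ x, IsCoupling (Λ x) (P x) (Q x)) (μ : Measure γ) :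
    IsCoupling (Λ ∘ₘ μ) (P ∘ₘ μ) (Q ∘ₘ μ) := by
  have hfst : Λ.map Prod.fst = P := by ext1 x; rw [Kernel.map_apply _ measurable_fst, (hΛ x).1]
  have hsnd : Λ.map Prod.snd = Q := by ext1 x; rw [Kernel.map_apply _ measurable_snd, (hΛ x).2]
  exact ⟨by rw [Measure.map_comp _ _ measurable_fst, hfst],
    by rw [Measure.map_comp _ _ measurable_snd, hsnd]⟩

end IsCoupling

section LiftDist

variable {X : Type*} [MeasurableSpace X] {d : X → X → ℝ≥0∞}

lemma liftDistE_le_lintegral {π : Measure (X × X)} {μ ν : Measure X} (h : IsCoupling π μ ν) :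
    liftDistE d μ ν ≤ ∫⁻ p, d p.1 p.2 ∂π :=
  sInf_le ⟨π, h, rfl⟩

lemma liftDistE_comp_le {Λ : Kernel X (X × X)} {P Q : Kernel X X}
    (hΛ : ∀ x, IsCoupling (Λ x) (P x) (Q x)) (hd : Measurable fun p : X × X => d p.1 p.2)
    (μ : Measure X) :
    liftDistE d (P ∘ₘ μ) (Q ∘ₘ μ) ≤ ∫⁻ x, ∫⁻ p, d p.1 p.2 ∂(Λ x) ∂μ := by
  rw [← Measure.lintegral_bind Λ.aemeasurable hd.aemeasurable]
  exact liftDistE_le_lintegral (IsCoupling.comp hΛ μ)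

end LiftDist

lemma MeasureTheory.Measure.map_compProd_comap_snd {α β γ : Type*} [MeasurableSpace α]
    [MeasurableSpace β] [MeasurableSpace γ] (π : Measure (α × β)) [SFinite π]
    (η : Kernel β γ) [IsSFiniteKernel η] :
    (π ⊗ₘ η.comap Prod.snd measurable_snd).map (fun q => (q.1.2, q.2)) = π.snd ⊗ₘ η := by
  ext s hs
  have hf : Measurable fun q : (α × β) × γ => (q.1.2, q.2) := by fun_prop
  rw [Measure.map_apply hf hs, Measure.compProd_apply (hf hs), Measure.compProd_apply hs,
    Measure.snd, lintegral_map (Kernel.measurable_kernel_prodMk_left hs) measurable_snd]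
  rfl

section Triangle

variable {X : Type*} [MeasurableSpace X] [StandardBorelSpace X] {d : X → X → ℝ≥0∞}

lemma liftDistE_le_lintegral_add_lintegral (hd : Measurable fun p : X × X => d p.1 p.2)
    (htri : ∀ x y z, d x z ≤ d x y + d y z) {π₁ π₂ : Measure (X × X)} {μ ν ρ : Measure X}
    [IsProbabilityMeasure μ] [IsProbabilityMeasure ν]
    (h₁ : IsCoupling π₁ μ ν) (h₂ : IsCoupling π₂ ν ρ) :
    liftDistE d μ ρ ≤ ∫⁻ p, d p.1 p.2 ∂π₁ + ∫⁻ p, d p.1 p.2 ∂π₂ := by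
  have := h₁.isProbabilityMeasure
  have := h₂.isProbabilityMeasure
  have : Nonempty X := ν.nonempty_of_neZero
  have hπ₂ : π₁.snd ⊗ₘ π₂.condKernel = π₂ := by
    rw [show π₁.snd = π₂.fst from h₁.2.trans h₂.1.symm]
    exact π₂.disintegrate _
  -- draw `(x, y) ∼ π₁`, then `z` from the conditional law of `π₂` given its first coordinate `y`
  set γ := π₁ ⊗ₘ π₂.condKernel.comap Prod.snd measurable_snd
  have hγ₁ : γ.map Prod.fst = π₁ := Measure.fst_compProd π₁ _
  have hγ₂ : γ.map (fun q => (q.1.2, q.2)) = π₂ := by rw [Measure.map_compProd_comap_snd, hπ₂]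
  have hcoup : IsCoupling (γ.map fun q => (q.1.1, q.2)) μ ρ := by
    constructor
    · rw [Measure.map_map measurable_fst (by fun_prop), ← h₁.1, ← hγ₁,
        Measure.map_map measurable_fst measurable_fst]
      rfl
    · rw [Measure.map_map measurable_snd (by fun_prop), ← h₂.2, ← hγ₂,
        Measure.map_map measurable_snd (by fun_prop)]
      rfl
  calc liftDistE d μ ρ ≤ ∫⁻ p, d p.1 p.2 ∂(γ.map fun q => (q.1.1, q.2)) :=
        liftDistE_le_lintegral hcoup
    _ = ∫⁻ q, d q.1.1 q.2 ∂γ := lintegral_map hd (by fun_prop)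
    _ ≤ ∫⁻ q, d q.1.1 q.1.2 + d q.1.2 q.2 ∂γ := lintegral_mono fun q => htri _ _ _
    _ = ∫⁻ q, d q.1.1 q.1.2 ∂γ + ∫⁻ q, d q.1.2 q.2 ∂γ :=
        lintegral_add_left (hd.comp measurable_fst) _
    _ = ∫⁻ p, d p.1 p.2 ∂(γ.map Prod.fst)
          + ∫⁻ p, d p.1 p.2 ∂(γ.map fun q => (q.1.2, q.2)) := by
        rw [lintegral_map hd measurable_fst, lintegral_map hd (by fun_prop)]
    _ = ∫⁻ p, d p.1 p.2 ∂π₁ + ∫⁻ p, d p.1 p.2 ∂π₂ := by rw [hγ₁, hγ₂]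

lemma liftDistE_triangle (hd : Measurable fun p : X × X => d p.1 p.2)
    (htri : ∀ x y z, d x z ≤ d x y + d y z) (μ ν ρ : Measure X)
    [IsProbabilityMeasure μ] [IsProbabilityMeasure ν] :
    liftDistE d μ ρ ≤ liftDistE d μ ν + liftDistE d ν ρ := by
  refine (le_iInf₂ ?_).trans_eq ENNReal.sInf_add.symm
  rintro _ ⟨π₁, h₁, rfl⟩
  refine (le_iInf₂ ?_).trans_eq ENNReal.add_sInf.symm
  rintro _ ⟨π₂, h₂, rfl⟩
  exact liftDistE_le_lintegral_add_lintegral hd htri h₁ h₂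

end Triangle

lemma ENNReal.le_two_mul_of_le_half_mul_add {a b : ℝ≥0∞} (ha : a ≠ ⊤)
    (h : a ≤ 1 / 2 * a + b) : a ≤ 2 * b := by
  refine (ENNReal.add_le_add_iff_left ha).1 ?_
  calc a + a = 2 * a := (two_mul a).symm
    _ ≤ 2 * (1 / 2 * a + b) := by gcongr
    _ = a + 2 * b := by
      rw [mul_add, ← mul_assoc, one_div, ENNReal.mul_inv_cancel two_ne_zero ENNReal.ofNat_ne_top,
        one_mul]

theorem stmt_17_general {X : Type*} [TopologicalSpace X] [PolishSpace X]
    [MeasurableSpace X] [BorelSpace X]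
    (dt : X → X → ℝ≥0∞)
    (hdt_triangle : ∀ x y z, dt x z ≤ dt x y + dt y z)
    (hdt_lsc : LowerSemicontinuous (fun p : X × X => dt p.1 p.2))
    (P Peps : Kernel X X) [IsMarkovKernel P]
    -- (i) `P` contracts the lifted distance by `1/2`
    (hcontr : ∀ μ ν : Measure X, IsProbabilityMeasure μ → IsProbabilityMeasure ν →
      liftDistE dt (μ.bind (fun x => P x)) (ν.bind (fun x => P x))
        ≤ (1 / 2) * liftDistE dt μ ν)
    -- (ii) a coupling of one-step transitions of `P` and `Peps` at cost `C' Ṽ(x)`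
    (C' : ℝ) (hC' : 0 ≤ C') (Vt : X → ℝ) (hVt_meas : Measurable Vt)
    (Λ : Kernel X (X × X))
    (hΛ : ∀ x : X, IsCoupling (Λ x) (P x) (Peps x) ∧
      ∫⁻ w, dt w.1 w.2 ∂(Λ x) ≤ ENNReal.ofReal (C' * Vt x))
    (μstar μeps : Measure X) [IsProbabilityMeasure μstar] [IsProbabilityMeasure μeps]
    (hinv : μstar.bind (fun x => P x) = μstar)
    (hinv_eps : μeps.bind (fun x => Peps x) = μeps)
    (hfin : liftDistE dt μstar μeps ≠ ⊤) :
    liftDistE dt μstar μeps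
      ≤ 2 * ENNReal.ofReal C' * ∫⁻ x, ENNReal.ofReal (Vt x) ∂μeps := by
  have hd : Measurable fun p : X × X => dt p.1 p.2 := hdt_lsc.measurable
  have hcontr_star : liftDistE dt μstar (P ∘ₘ μeps) ≤ 1 / 2 * liftDistE dt μstar μeps := by
    have := hcontr μstar μeps ‹_› ‹_›
    rwa [hinv] at this
  have hperturb : liftDistE dt (P ∘ₘ μeps) μeps
      ≤ ENNReal.ofReal C' * ∫⁻ x, ENNReal.ofReal (Vt x) ∂μeps :=
    calc liftDistE dt (P ∘ₘ μeps) μeps = liftDistE dt (P ∘ₘ μeps) (Peps ∘ₘ μeps) :=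
          congrArg _ hinv_eps.symm
      _ ≤ ∫⁻ x, ∫⁻ p, dt p.1 p.2 ∂(Λ x) ∂μeps := liftDistE_comp_le (fun x => (hΛ x).1) hd μeps
      _ ≤ ∫⁻ x, ENNReal.ofReal C' * ENNReal.ofReal (Vt x) ∂μeps :=
          lintegral_mono fun x => (hΛ x).2.trans_eq (ENNReal.ofReal_mul hC')
      _ = ENNReal.ofReal C' * ∫⁻ x, ENNReal.ofReal (Vt x) ∂μeps :=
          lintegral_const_mul _ hVt_meas.ennreal_ofReal
  rw [mul_assoc]
  exact ENNReal.le_two_mul_of_le_half_mul_add hfin <|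
    (liftDistE_triangle hd hdt_triangle μstar (P ∘ₘ μeps) μeps).trans
      (add_le_add hcontr_star hperturb)

/-- **Stability of the invariant measure under perturbation.** If `P` contracts the lifted
distance `d̃` by a factor `1/2` and the one-step transitions of `P` and of a perturbed
kernel `P^ε` can be coupled at cost at most `C' Ṽ(x)`, then the invariant measures `μ★` of
`P` and `μ★^ε` of `P^ε` satisfy `d̃(μ★, μ★^ε) ≤ 2 C' ∫ Ṽ dμ★^ε`. -/
theorem stmt_17 {X : Type*} [TopologicalSpace X] [PolishSpace X]
    [MeasurableSpace X] [BorelSpace X]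
    (dt : X → X → ℝ≥0∞)
    (hdt_symm : ∀ x y, dt x y = dt y x)
    (hdt_triangle : ∀ x y z, dt x z ≤ dt x y + dt y z)
    (hdt_eq_zero : ∀ x y, dt x y = 0 ↔ x = y)
    (hdt_lsc : LowerSemicontinuous (fun p : X × X => dt p.1 p.2))
    (P Peps : Kernel X X) [IsMarkovKernel P] [IsMarkovKernel Peps]
    -- (i) `P` contracts the lifted distance by `1/2`
    (hcontr : ∀ μ ν : Measure X, IsProbabilityMeasure μ → IsProbabilityMeasure ν →
      liftDistE dt (μ.bind (fun x => P x)) (ν.bind (fun x => P x))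
        ≤ (1 / 2) * liftDistE dt μ ν)
    -- (ii) a coupling of one-step transitions of `P` and `Peps` at cost `C' Ṽ(x)`
    (C' : ℝ) (hC' : 0 ≤ C') (Vt : X → ℝ) (hVt_meas : Measurable Vt)
    (hVt_nonneg : ∀ x, 0 ≤ Vt x)
    (Λ : Kernel X (X × X)) [IsMarkovKernel Λ]
    (hΛ : ∀ x : X, IsCoupling (Λ x) (P x) (Peps x) ∧
      ∫⁻ w, dt w.1 w.2 ∂(Λ x) ≤ ENNReal.ofReal (C' * Vt x))
    (μstar μeps : Measure X) [IsProbabilityMeasure μstar] [IsProbabilityMeasure μeps]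
    (hinv : μstar.bind (fun x => P x) = μstar)
    (hinv_eps : μeps.bind (fun x => Peps x) = μeps)
    (hVt_int : ∫⁻ x, ENNReal.ofReal (Vt x) ∂μeps ≠ ⊤)
    (hfin : liftDistE dt μstar μeps ≠ ⊤) :
    liftDistE dt μstar μeps
      ≤ 2 * ENNReal.ofReal C' * ∫⁻ x, ENNReal.ofReal (Vt x) ∂μeps :=
  stmt_17_general dt hdt_triangle hdt_lsc P Peps hcontr C' hC' Vt hVt_meas Λ hΛ μstar μeps hinv
    hinv_eps hfin
end
end

section
/- Let Q be a Markov kernel on a Polish space X, d: X×X → [0,1] a distance-like function, V: X → ℝ₊ a continuous function integrable with respect to each Q(x,·) and satisfying (QV)(x) ≤ (1/8)V(x) + K_V for all x and some K_V > 0. Suppose there exists ε > 0 such that the lifted distance satisfies d(Q(x,·), Q(y,·)) ≤ 1 − ε for all x, y with V(x) + V(y) ≤ 4K_V. Then for every β > 0 and every pair x, y with d(x,y) = 1 and V(x) + V(y) ≤ 4K_V, the function d̃_β(x,y) = √(d(x,y)(1 + βV(x) + βV(y))) lifted to measures satisfies d̃_β(Q(x,·), Q(y,·))² ≤ (1 −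 ε)(1 + 4βK_V) d̃_β(x,y)². -/
open MeasureTheory ProbabilityTheory Filter Topology
open scoped ENNReal NNReal

noncomputable section

/-- The lift of a distance-like function `d` to probability measures. -/
def liftDist {α : Type*} [MeasurableSpace α] (d : α → α → ℝ) (μ ν : Measure α) : ℝ≥0∞ :=
  sInf {r : ℝ≥0∞ | ∃ π : Measure (α × α), IsCoupling π μ ν ∧
    r = ∫⁻ p, ENNReal.ofReal (d p.1 p.2) ∂π}

/-!
Fix a coupling `π` of `Q(x,·)` and `Q(y,·)` and write `w = 1 + β V ⊗ 1 + β 1 ⊗ V`. By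
Cauchy–Schwarz, `(∫ √(d w) dπ)² ≤ (∫ d dπ) (∫ w dπ)`. The second factor only sees the marginals,
so by the drift condition it is at most `1 + β (V x + V y) / 8 + 2 β K_V ≤ 1 + 4 β K_V` on the
level set; the infimum of the first factor over all couplings is `d(Q(x,·), Q(y,·)) ≤ 1 - ε`.
Finally `d x y (1 + β V x + β V y) ≥ 1` because `d x y = 1`.
-/

namespace IsCoupling

variable {α β : Type*} [MeasurableSpace α] [MeasurableSpace β]
  {π : Measure (α × β)} {μ : Measure α} {ν : Measure β} {f : α → ℝ} {g : β → ℝ}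

theorem integrable_add_comp (h : IsCoupling π μ ν) (hf : Integrable f μ) (hg : Integrable g ν) :
    Integrable (fun p => f p.1 + g p.2) π := by
  rw [← h.1] at hf
  rw [← h.2] at hg
  exact (hf.comp_measurable measurable_fst).add (hg.comp_measurable measurable_snd)

theorem integral_add_comp (h : IsCoupling π μ ν) (hf : Integrable f μ) (hg : Integrable g ν) :
    ∫ p, (f p.1 + g p.2) ∂π = ∫ a, f a ∂μ + ∫ b, g b ∂ν := by
  rw [← h.1] at hf ⊢
  rw [← h.2] at hg ⊢
  have hf' : Integrable (fun p : α × β => f p.1) π := hf.comp_measurable measurable_fst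
  have hg' : Integrable (fun p : α × β => g p.2) π := hg.comp_measurable measurable_snd
  rw [integral_add hf' hg', integral_map measurable_fst.aemeasurable hf.aestronglyMeasurable,
    integral_map measurable_snd.aemeasurable hg.aestronglyMeasurable]

theorem integral_one_add_mul_add_mul {μ ν : Measure α} [IsProbabilityMeasure μ]
    {π : Measure (α × α)} (h : IsCoupling π μ ν) {V : α → ℝ} (hμ : Integrable V μ)
    (hν : Integrable V ν) (b : ℝ) :
    ∫ p, (1 + b * V p.1 + b * V p.2) ∂π = 1 + b * ∫ a, V a ∂μ + b * ∫ a, V a ∂ν := by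
  rw [h.integral_add_comp (f := fun a => 1 + b * V a) ((integrable_const 1).add (hμ.const_mul b))
    (hν.const_mul b), integral_add (integrable_const 1) (hμ.const_mul b), integral_const_mul,
    integral_const_mul]
  simp

end IsCoupling

theorem ENNReal.ofReal_sqrt_rpow_two (t : ℝ) : ENNReal.ofReal √t ^ (2 : ℝ) = ENNReal.ofReal t := by
  rcases le_total 0 t with ht | ht
  · rw [ENNReal.rpow_two, ← ENNReal.ofReal_pow (Real.sqrt_nonneg t), Real.sq_sqrt ht]
  · simp [Real.sqrt_eq_zero'.mpr ht, ENNReal.ofReal_of_nonpos ht]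

theorem sq_lintegral_ofReal_sqrt_mul_le {γ : Type*} [MeasurableSpace γ] (m : Measure γ)
    {f g : γ → ℝ} (hf : AEMeasurable f m) (hg : AEMeasurable g m) (hg0 : ∀ a, 0 ≤ g a) :
    (∫⁻ a, ENNReal.ofReal √(f a * g a) ∂m) ^ 2
      ≤ (∫⁻ a, ENNReal.ofReal (f a) ∂m) * ∫⁻ a, ENNReal.ofReal (g a) ∂m := by
  have holder := ENNReal.lintegral_mul_le_Lp_mul_Lq m Real.HolderConjugate.two_two
    hf.sqrt.ennreal_ofReal hg.sqrt.ennreal_ofReal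
  simp only [Pi.mul_apply, ENNReal.ofReal_sqrt_rpow_two] at holder
  calc (∫⁻ a, ENNReal.ofReal √(f a * g a) ∂m) ^ 2
      = (∫⁻ a, ENNReal.ofReal √(f a) * ENNReal.ofReal √(g a) ∂m) ^ 2 := by
        simp_rw [Real.sqrt_mul' _ (hg0 _), ENNReal.ofReal_mul (Real.sqrt_nonneg _)]
    _ ≤ ((∫⁻ a, ENNReal.ofReal (f a) ∂m) ^ (1 / 2 : ℝ)
          * (∫⁻ a, ENNReal.ofReal (g a) ∂m) ^ (1 / 2 : ℝ)) ^ 2 := by gcongr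
    _ = _ := by
        rw [mul_pow, ← ENNReal.rpow_natCast, ← ENNReal.rpow_natCast, ← ENNReal.rpow_mul,
          ← ENNReal.rpow_mul]
        norm_num

section liftDist

variable {α : Type*} [MeasurableSpace α] {μ ν : Measure α} {c : α → α → ℝ}

theorem liftDist_le_lintegral {π : Measure (α × α)} (hπ : IsCoupling π μ ν) :
    liftDist c μ ν ≤ ∫⁻ p, ENNReal.ofReal (c p.1 p.2) ∂π :=
  sInf_le ⟨π, hπ, rfl⟩

theorem le_liftDist_mul {C x : ℝ≥0∞} (hC0 : C ≠ 0) (hCtop : C ≠ ∞)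
    (h : ∀ π, IsCoupling π μ ν → x ≤ (∫⁻ p, ENNReal.ofReal (c p.1 p.2) ∂π) * C) :
    x ≤ liftDist c μ ν * C := by
  rw [← ENNReal.div_le_iff hC0 hCtop]
  refine le_sInf ?_
  rintro r ⟨π, hπ, rfl⟩
  rw [ENNReal.div_le_iff hC0 hCtop]
  exact h π hπ

theorem sq_liftDist_sqrt_mul_le {w : α → α → ℝ} (hc : Measurable fun p : α × α => c p.1 p.2)
    (hw0 : ∀ a b, 0 ≤ w a b)
    {C : ℝ≥0∞} (hC0 : C ≠ 0) (hCtop : C ≠ ∞)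
    (hw : ∀ π, IsCoupling π μ ν →
      AEMeasurable (fun p => w p.1 p.2) π ∧ ∫⁻ p, ENNReal.ofReal (w p.1 p.2) ∂π ≤ C) :
    liftDist (fun a b => √(c a b * w a b)) μ ν ^ 2 ≤ liftDist c μ ν * C := by
  refine le_liftDist_mul hC0 hCtop fun π hπ => ?_
  obtain ⟨hwm, hwC⟩ := hw π hπ
  calc liftDist (fun a b => √(c a b * w a b)) μ ν ^ 2
      ≤ (∫⁻ p, ENNReal.ofReal √(c p.1 p.2 * w p.1 p.2) ∂π) ^ 2 := by
        gcongr
        exact liftDist_le_lintegral hπ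
    _ ≤ (∫⁻ p, ENNReal.ofReal (c p.1 p.2) ∂π) * ∫⁻ p, ENNReal.ofReal (w p.1 p.2) ∂π :=
        sq_lintegral_ofReal_sqrt_mul_le π hc.aemeasurable hwm fun p => hw0 _ _
    _ ≤ (∫⁻ p, ENNReal.ofReal (c p.1 p.2) ∂π) * C := by gcongr

end liftDist

theorem stmt_18_general {X : Type*} [TopologicalSpace X] [PolishSpace X]
    [MeasurableSpace X] [BorelSpace X]
    (Q : Kernel X X) [IsMarkovKernel Q]
    (d : X → X → ℝ)
    (hd_lsc : LowerSemicontinuous (fun p : X × X => d p.1 p.2))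
    (V : X → ℝ) (hVnonneg : ∀ x, 0 ≤ V x)
    (hVint : ∀ x, Integrable V (Q x))
    (K_V : ℝ)
    (hQV : ∀ x, ∫ y, V y ∂(Q x) ≤ (1 / 8) * V x + K_V)
    (ε : ℝ)
    (hsmall : ∀ x y : X, V x + V y ≤ 4 * K_V →
      liftDist d (Q x) (Q y) ≤ ENNReal.ofReal (1 - ε)) :
    ∀ β : ℝ, 0 < β → ∀ x y : X, d x y = 1 → V x + V y ≤ 4 * K_V →
      (liftDist (fun a b => Real.sqrt (d a b * (1 + β * V a + β * V b))) (Q x) (Q y)) ^ 2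
        ≤ ENNReal.ofReal
            ((1 - ε) * (1 + 4 * β * K_V) * (d x y * (1 + β * V x + β * V y))) := by
  intro β hβ x y hdxy hlevel
  have hK : 0 ≤ K_V := by linarith [hVnonneg x, hVnonneg y]
  have hw0 : ∀ a b, 0 ≤ 1 + β * V a + β * V b := fun a b => by
    linarith [mul_nonneg hβ.le (hVnonneg a), mul_nonneg hβ.le (hVnonneg b)]
  have hweight : ∀ π, IsCoupling π (Q x) (Q y) →
      AEMeasurable (fun p : X × X => 1 + β * V p.1 + β * V p.2) π ∧
        ∫⁻ p, ENNReal.ofReal (1 + β * V p.1 + β * V p.2) ∂π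
          ≤ ENNReal.ofReal (1 + 4 * β * K_V) := by
    intro π hπ
    have hint := hπ.integrable_add_comp (f := fun a => 1 + β * V a)
      ((integrable_const 1).add ((hVint x).const_mul β)) ((hVint y).const_mul β)
    refine ⟨hint.aemeasurable, ?_⟩
    rw [← ofReal_integral_eq_lintegral_ofReal hint (ae_of_all _ fun p => hw0 p.1 p.2),
      hπ.integral_one_add_mul_add_mul (hVint x) (hVint y)]
    refine ENNReal.ofReal_le_ofReal ?_
    nlinarith [mul_le_mul_of_nonneg_left (hQV x) hβ.le, mul_le_mul_of_nonneg_left (hQV y) hβ.le,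
      mul_le_mul_of_nonneg_left hlevel hβ.le, mul_nonneg hβ.le hK]
  calc liftDist (fun a b => √(d a b * (1 + β * V a + β * V b))) (Q x) (Q y) ^ 2
      ≤ liftDist d (Q x) (Q y) * ENNReal.ofReal (1 + 4 * β * K_V) :=
        sq_liftDist_sqrt_mul_le hd_lsc.measurable hw0
          (ENNReal.ofReal_pos.mpr (by positivity)).ne' ENNReal.ofReal_ne_top hweight
    _ ≤ ENNReal.ofReal (1 - ε) * ENNReal.ofReal (1 + 4 * β * K_V) := by
        gcongr
        exact hsmall x y hlevel
    _ = ENNReal.ofReal ((1 - ε) * (1 + 4 * β * K_V)) := (ENNReal.ofReal_mul' (by positivity)).symm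
    _ ≤ ENNReal.ofReal ((1 - ε) * (1 + 4 * β * K_V))
          * ENNReal.ofReal (d x y * (1 + β * V x + β * V y)) :=
        le_mul_of_one_le_right' (by
          rw [hdxy, one_mul, ENNReal.one_le_ofReal]
          linarith [mul_nonneg hβ.le (hVnonneg x), mul_nonneg hβ.le (hVnonneg y)])
    _ = _ := (ENNReal.ofReal_mul' (by rw [hdxy, one_mul]; exact hw0 x y)).symm

/-- **"Close to the origin" estimate in the weak Harris theorem.** If `QV ≤ V/8 + K_V` and
the level set `{V(x)+V(y) ≤ 4K_V}` is `d`-small with constant `ε`, then for points in this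
level set at `d`-distance `1`, the weighted distance
`d̃_β(x,y) = √(d(x,y)(1 + βV(x) + βV(y)))` contracts:
`d̃_β(Q(x,·),Q(y,·))² ≤ (1-ε)(1+4βK_V) d̃_β(x,y)²`. -/
theorem stmt_18 {X : Type*} [TopologicalSpace X] [PolishSpace X]
    [MeasurableSpace X] [BorelSpace X]
    (Q : Kernel X X) [IsMarkovKernel Q]
    (d : X → X → ℝ)
    (hd_symm : ∀ x y, d x y = d y x)
    (hd_eq_zero : ∀ x y, d x y = 0 ↔ x = y)
    (hd_lsc : LowerSemicontinuous (fun p : X × X => d p.1 p.2))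
    (hd_nonneg : ∀ x y, 0 ≤ d x y) (hd_le_one : ∀ x y, d x y ≤ 1)
    (V : X → ℝ) (hVcont : Continuous V) (hVnonneg : ∀ x, 0 ≤ V x)
    (hVint : ∀ x, Integrable V (Q x))
    (K_V : ℝ) (hK_V : 0 < K_V)
    (hQV : ∀ x, ∫ y, V y ∂(Q x) ≤ (1 / 8) * V x + K_V)
    (ε : ℝ) (hε : 0 < ε)
    (hsmall : ∀ x y : X, V x + V y ≤ 4 * K_V →
      liftDist d (Q x) (Q y) ≤ ENNReal.ofReal (1 - ε)) :
    ∀ β : ℝ, 0 < β → ∀ x y : X, d x y = 1 → V x + V y ≤ 4 * K_V →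
      (liftDist (fun a b => Real.sqrt (d a b * (1 + β * V a + β * V b))) (Q x) (Q y)) ^ 2
        ≤ ENNReal.ofReal
            ((1 - ε) * (1 + 4 * β * K_V) * (d x y * (1 + β * V x + β * V y))) :=
  stmt_18_general Q d hd_lsc V hVnonneg hVint K_V hQV ε hsmall
end
end
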